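/- For every n-vertex r-regular finite simple graph G, i_4(G) − k_4(G) = C(n,4) − C(n−2,2)·(nr/2) + (n−3)·(n·C(r,2) − k_3(G)) − n·C(r,3) + (k_2⊎k_2)(G) − c_4(G), where the identity is understood in the integers. -/
import Mathlib


open Finset

/-- `numIndep G t` is the number of independent sets of size `t` in `G`, i.e. the number of
`t`-element subsets of the vertex set containing no edge. -/
def numIndep {V : Type*} (G : SimpleGraph V) [Fintype V] [DecidableEq V] [DecidableRel G.Adj]
    (t : ℕ) : ℕ :=
  (((univ : Finset V).powersetCard t).filter fun s => ∀ u ∈ s, ∀ v ∈ s, ¬ G.Adj u v).card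

/-- `numInducedReg G k d` is the number of `k`-element vertex subsets `J` such that every vertex
of `J` has exactly `d` neighbours inside `J`, i.e. such that the induced subgraph `G[J]` is
`d`-regular.  In particular `numInducedReg G 3 2 = k₃(G)` (triangles),
`numInducedReg G 4 3 = k₄(G)`, `numInducedReg G 4 2 = c₄(G)` (a 2-regular graph on 4 vertices is
a 4-cycle), `numInducedReg G 4 1 = (k₂⊎k₂)(G)` (a 1-regular graph on 4 vertices is a perfect
matching), and `numInducedReg G 5 2 = c₅(G)` (a 2-regular graph on 5 vertices is a 5-cycle). -/
def numInducedReg {V : Type*} (G : SimpleGraph V) [Fintype V] [DecidableEq V] [DecidableRel G.Adj]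
    (k d : ℕ) : ℕ :=
  (((univ : Finset V).powersetCard k).filter
    fun J => ∀ v ∈ J, (J.filter fun u => G.Adj v u).card = d).card

set_option linter.unusedSectionVars false

section AuxStmt6
variable {V : Type*} [Fintype V] [DecidableEq V] (G : SimpleGraph V) [DecidableRel G.Adj]



lemma count_supersets (S : Finset V) (k : ℕ) (hS : S.card ≤ k) :
    (((univ : Finset V).powersetCard k).filter fun J => S ⊆ J).card
      = (Fintype.card V - S.card).choose (k - S.card) := by
  have hcard : ((univ \ S : Finset V)).card = Fintype.card V - S.card := by
    rw [card_sdiff_of_subset (subset_univ S), card_univ]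
  rw [← hcard, ← Finset.card_powersetCard]
  apply Finset.card_bij' (fun J _ => J \ S) (fun T _ => T ∪ S)
  · intro J hJ
    simp only [mem_filter, mem_powersetCard] at hJ ⊢
    obtain ⟨⟨-, hc⟩, hSJ⟩ := hJ
    exact ⟨sdiff_subset_sdiff (subset_univ J) le_rfl, by rw [card_sdiff_of_subset hSJ, hc]⟩
  · intro T hT
    simp only [mem_powersetCard] at hT
    obtain ⟨hTsub, hTc⟩ := hT
    have hdisj : Disjoint T S := disjoint_of_subset_left hTsub (sdiff_disjoint)
    simp only [mem_filter, mem_powersetCard]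
    refine ⟨⟨subset_univ _, ?_⟩, subset_union_right⟩
    rw [card_union_of_disjoint hdisj, hTc, Nat.sub_add_cancel hS]
  · intro J hJ
    simp only [mem_filter, mem_powersetCard] at hJ
    exact sdiff_union_of_subset hJ.2
  · intro T hT
    simp only [mem_powersetCard] at hT
    exact union_sdiff_cancel_right (disjoint_of_subset_left hT.1 sdiff_disjoint)

lemma master {α : Type*} (F : Finset α) (f : α → Finset V) (c k : ℕ)
    (hc : ∀ x ∈ F, (f x).card = c) (hck : c ≤ k) :
    ∑ J ∈ (univ : Finset V).powersetCard k, (F.filter fun x => f x ⊆ J).card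
      = F.card * (Fintype.card V - c).choose (k - c) := by
  calc ∑ J ∈ (univ : Finset V).powersetCard k, (F.filter fun x => f x ⊆ J).card
      = ∑ J ∈ (univ : Finset V).powersetCard k, ∑ x ∈ F, (if f x ⊆ J then 1 else 0) := by
        simp_rw [Finset.card_filter]
    _ = ∑ x ∈ F, ∑ J ∈ (univ : Finset V).powersetCard k, (if f x ⊆ J then 1 else 0) :=
        Finset.sum_comm
    _ = ∑ x ∈ F, (Fintype.card V - c).choose (k - c) := by
        refine Finset.sum_congr rfl fun x hx => ?_
        rw [← Finset.card_filter, count_supersets (f x) k (by rw [hc x hx]; exact hck), hc x hx]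
    _ = F.card * (Fintype.card V - c).choose (k - c) := by
        rw [Finset.sum_const, smul_eq_mul]



lemma neighbor_inter (v : V) (J : Finset V) :
    G.neighborFinset v ∩ J = J.filter fun u => G.Adj v u := by
  ext u; simp [mem_inter, mem_filter, SimpleGraph.mem_neighborFinset, and_comm]

lemma LA (J : Finset V) :
    (((univ : Finset (V × V)).filter fun p => G.Adj p.1 p.2).filter
        fun p => ({p.1, p.2} : Finset V) ⊆ J).card
      = ∑ v ∈ J, (J.filter fun u => G.Adj v u).card := by
  have h : (((univ : Finset (V × V)).filter fun p => G.Adj p.1 p.2).filter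
        fun p => ({p.1, p.2} : Finset V) ⊆ J) = (J ×ˢ J).filter fun p => G.Adj p.1 p.2 := by
    ext ⟨u, v⟩
    simp only [mem_filter, mem_univ, true_and, insert_subset_iff, singleton_subset_iff,
      mem_product]
    tauto
  rw [h, Finset.card_filter, Finset.sum_product]
  exact Finset.sum_congr rfl fun v _ => (Finset.card_filter _ _).symm

lemma LPgen (m : ℕ) (J : Finset V) :
    ((((univ : Finset V).sigma fun v => (G.neighborFinset v).powersetCard m).filter
        fun x => insert x.1 x.2 ⊆ J).card)
      = ∑ v ∈ J, ((J.filter fun u => G.Adj v u).card).choose m := by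
  have h : (((univ : Finset V).sigma fun v => (G.neighborFinset v).powersetCard m).filter
        fun x => insert x.1 x.2 ⊆ J)
      = J.sigma fun v => ((G.neighborFinset v ∩ J)).powersetCard m := by
    ext ⟨v, S⟩
    simp only [mem_filter, mem_sigma, mem_univ, true_and, mem_powersetCard,
      insert_subset_iff, subset_inter_iff]
    tauto
  rw [h, Finset.card_sigma]
  exact Finset.sum_congr rfl fun v _ => by
    rw [Finset.card_powersetCard, neighbor_inter]

lemma LTri (J : Finset V) :
    ((((univ : Finset V).powersetCard 3).filter
          fun T => ∀ v ∈ T, (T.filter fun u => G.Adj v u).card = 2).filter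
        fun T => T ⊆ J).card
      = ((J.powersetCard 3).filter fun T => ∀ v ∈ T, (T.filter fun u => G.Adj v u).card = 2).card := by
  congr 1
  ext T
  simp only [mem_filter, mem_powersetCard, subset_univ, true_and]
  tauto



lemma arith6 (e1 e2 e3 e4 e5 e6 : ℕ) (h1 : e1 ≤ 1) (h2 : e2 ≤ 1) (h3 : e3 ≤ 1)
    (h4 : e4 ≤ 1) (h5 : e5 ≤ 1) (h6 : e6 ≤ 1) :
    2 + 2 * ((e1+e2+e3).choose 2 + (e1+e4+e5).choose 2 + (e2+e4+e6).choose 2 + (e3+e5+e6).choose 2)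
      + 2 * (if (e1+e2+e3 = 1 ∧ e1+e4+e5 = 1 ∧ e2+e4+e6 = 1 ∧ e3+e5+e6 = 1) then 1 else 0)
      + 2 * (if (e1+e2+e3 = 3 ∧ e1+e4+e5 = 3 ∧ e2+e4+e6 = 3 ∧ e3+e5+e6 = 3) then 1 else 0)
    = ((e1+e2+e3) + (e1+e4+e5) + (e2+e4+e6) + (e3+e5+e6))
      + 2 * (e4*e5*e6 + e2*e3*e6 + e1*e3*e5 + e1*e2*e4)
      + 2 * ((e1+e2+e3).choose 3 + (e1+e4+e5).choose 3 + (e2+e4+e6).choose 3 + (e3+e5+e6).choose 3)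
      + 2 * (if (e1+e2+e3 = 2 ∧ e1+e4+e5 = 2 ∧ e2+e4+e6 = 2 ∧ e3+e5+e6 = 2) then 1 else 0)
      + 2 * (if (e1+e2+e3 = 0 ∧ e1+e4+e5 = 0 ∧ e2+e4+e6 = 0 ∧ e3+e5+e6 = 0) then 1 else 0) := by
  interval_cases e1 <;> interval_cases e2 <;> interval_cases e3 <;> interval_cases e4 <;>
    interval_cases e5 <;> interval_cases e6 <;> decide


lemma ite_and3 (p q r : Prop) [Decidable p] [Decidable q] [Decidable r] :
    (if p ∧ q ∧ r then (1:ℕ) else 0)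
      = (if p then 1 else 0) * (if q then 1 else 0) * (if r then 1 else 0) := by
  by_cases hp : p <;> by_cases hq : q <;> by_cases hr : r <;> simp [hp, hq, hr]

lemma sum_four {M : Type*} [AddCommMonoid M] (a b c d : V) (hab : a ≠ b) (hac : a ≠ c)
    (had : a ≠ d) (hbc : b ≠ c) (hbd : b ≠ d) (hcd : c ≠ d) (f : V → M) :
    ∑ v ∈ ({a, b, c, d} : Finset V), f v = f a + f b + f c + f d := by
  rw [show ({a, b, c, d} : Finset V) = insert a (insert b (insert c {d})) from rfl,
    Finset.sum_insert (by simp [hab, hac, had]), Finset.sum_insert (by simp [hbc, hbd]),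
    Finset.sum_insert (by simp [hcd]), Finset.sum_singleton]
  simp [add_assoc]

lemma card_filter_four (a b c d : V) (hab : a ≠ b) (hac : a ≠ c)
    (had : a ≠ d) (hbc : b ≠ c) (hbd : b ≠ d) (hcd : c ≠ d) (p : V → Prop) [DecidablePred p] :
    (({a, b, c, d} : Finset V).filter p).card
      = (if p a then 1 else 0) + (if p b then 1 else 0) + (if p c then 1 else 0)
        + (if p d then 1 else 0) := by
  rw [Finset.card_filter, sum_four a b c d hab hac had hbc hbd hcd]

lemma forall_four (a b c d : V) (p : V → Prop) :
    (∀ v ∈ ({a, b, c, d} : Finset V), p v) ↔ p a ∧ p b ∧ p c ∧ p d := by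
  simp [forall_eq_or_imp]

lemma isTri_iff (x y z : V) (hxy : x ≠ y) (hxz : x ≠ z) (hyz : y ≠ z) :
    (∀ v ∈ ({x, y, z} : Finset V), (({x, y, z} : Finset V).filter fun u => G.Adj v u).card = 2)
      ↔ (G.Adj x y ∧ G.Adj x z ∧ G.Adj y z) := by
  have key : ∀ v : V, (({x, y, z} : Finset V).filter fun u => G.Adj v u).card
      = (if G.Adj v x then 1 else 0) + (if G.Adj v y then 1 else 0)
        + (if G.Adj v z then 1 else 0) := by
    intro v
    rw [show ({x, y, z} : Finset V) = insert x (insert y {z}) from rfl, Finset.card_filter,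
      Finset.sum_insert (by simp [hxy, hxz]), Finset.sum_insert (by simp [hyz]),
      Finset.sum_singleton, ← add_assoc]
  simp only [forall_eq_or_imp, forall_eq, Finset.mem_insert, Finset.mem_singleton, key]
  have c1 : G.Adj y x ↔ G.Adj x y := G.adj_comm y x
  have c2 : G.Adj z x ↔ G.Adj x z := G.adj_comm z x
  have c3 : G.Adj z y ↔ G.Adj y z := G.adj_comm z y
  by_cases h1 : G.Adj x y <;> by_cases h2 : G.Adj x z <;> by_cases h3 : G.Adj y z <;>
    simp [h1, h2, h3, c1, c2, c3, G.irrefl]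

lemma indep_iff (J : Finset V) :
    (∀ u ∈ J, ∀ v ∈ J, ¬ G.Adj u v) ↔ ∀ v ∈ J, (J.filter fun u => G.Adj v u).card = 0 := by
  constructor
  · intro h v hv
    rw [Finset.card_eq_zero, Finset.filter_eq_empty_iff]
    intro u hu
    exact h v hv u hu
  · intro h u hu v hv
    have := h u hu
    rw [Finset.card_eq_zero, Finset.filter_eq_empty_iff] at this
    exact this hv


lemma powersetCard_pred_card (J : Finset V) (k : ℕ) (hJ : J.card = k + 1)
    (P : Finset V → Prop) [DecidablePred P] :
    ((J.powersetCard k).filter P).card = (J.filter fun v => P (J.erase v)).card := by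
  symm
  apply Finset.card_bij (fun v _ => J.erase v)
  · intro v hv
    simp only [mem_filter] at hv ⊢
    simp only [mem_powersetCard]
    exact ⟨⟨erase_subset _ _, by rw [card_erase_of_mem hv.1, hJ]; omega⟩, hv.2⟩
  · intro u hu v hv h
    simp only [mem_filter] at hu hv
    by_contra hne
    have : u ∈ J.erase v := Finset.mem_erase.mpr ⟨hne, hu.1⟩
    rw [← h] at this
    exact (Finset.mem_erase.mp this).1 rfl
  · intro T hT
    simp only [mem_filter, mem_powersetCard] at hT
    have hne : (J \ T).Nonempty := by
      refine Finset.nonempty_of_ne_empty fun h => ?_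
      have := Finset.card_sdiff_of_subset hT.1.1
      rw [h] at this
      simp [hJ, hT.1.2] at this
    obtain ⟨v, hv⟩ := hne
    have hvJ : v ∈ J := (Finset.mem_sdiff.mp hv).1
    have hvT : v ∉ T := (Finset.mem_sdiff.mp hv).2
    have hTe : T = J.erase v := by
      apply Finset.eq_of_subset_of_card_le
      · intro x hx
        exact Finset.mem_erase.mpr ⟨fun h => hvT (h ▸ hx), hT.1.1 hx⟩
      · rw [card_erase_of_mem hvJ, hJ, hT.1.2]; omega
    refine ⟨v, ?_, hTe.symm⟩
    simp only [mem_filter]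
    exact ⟨hvJ, by rw [← hTe]; exact hT.2⟩

lemma pointwise (J : Finset V) (hJ : J.card = 4) :
    2 + 2 * (∑ v ∈ J, ((J.filter fun u => G.Adj v u).card).choose 2)
      + 2 * (if (∀ v ∈ J, (J.filter fun u => G.Adj v u).card = 1) then 1 else 0)
      + 2 * (if (∀ v ∈ J, (J.filter fun u => G.Adj v u).card = 3) then 1 else 0)
    = (∑ v ∈ J, (J.filter fun u => G.Adj v u).card)
      + 2 * ((J.powersetCard 3).filter fun T =>
          ∀ v ∈ T, (T.filter fun u => G.Adj v u).card = 2).card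
      + 2 * (∑ v ∈ J, ((J.filter fun u => G.Adj v u).card).choose 3)
      + 2 * (if (∀ v ∈ J, (J.filter fun u => G.Adj v u).card = 2) then 1 else 0)
      + 2 * (if (∀ u ∈ J, ∀ v ∈ J, ¬ G.Adj u v) then 1 else 0) := by
  obtain ⟨a, t, hat, rfl, ht3⟩ := Finset.card_eq_succ.mp hJ
  obtain ⟨b, c, d, hbc, hbd, hcd, rfl⟩ := Finset.card_eq_three.mp ht3
  simp only [Finset.mem_insert, Finset.mem_singleton] at hat
  push_neg at hat
  obtain ⟨hab, hac, had⟩ := hat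
  have hda : ((({a,b,c,d} : Finset V)).filter fun u => G.Adj a u).card
      = (if G.Adj a b then 1 else 0) + (if G.Adj a c then 1 else 0)
        + (if G.Adj a d then 1 else 0) := by
    rw [card_filter_four a b c d hab hac had hbc hbd hcd]
    simp [G.irrefl]
  have hdb : ((({a,b,c,d} : Finset V)).filter fun u => G.Adj b u).card
      = (if G.Adj a b then 1 else 0) + (if G.Adj b c then 1 else 0)
        + (if G.Adj b d then 1 else 0) := by
    rw [card_filter_four a b c d hab hac had hbc hbd hcd]
    simp [G.irrefl, G.adj_comm b a]
  have hdc : ((({a,b,c,d} : Finset V)).filter fun u => G.Adj c u).card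
      = (if G.Adj a c then 1 else 0) + (if G.Adj b c then 1 else 0)
        + (if G.Adj c d then 1 else 0) := by
    rw [card_filter_four a b c d hab hac had hbc hbd hcd]
    simp [G.irrefl, G.adj_comm c a, G.adj_comm c b]
  have hdd : ((({a,b,c,d} : Finset V)).filter fun u => G.Adj d u).card
      = (if G.Adj a d then 1 else 0) + (if G.Adj b d then 1 else 0)
        + (if G.Adj c d then 1 else 0) := by
    rw [card_filter_four a b c d hab hac had hbc hbd hcd]
    simp [G.irrefl, G.adj_comm d a, G.adj_comm d b, G.adj_comm d c]
  have e_a : (({a,b,c,d} : Finset V)).erase a = {b,c,d} :=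
    Finset.erase_insert (by simp [hab, hac, had])
  have e_b : (({a,b,c,d} : Finset V)).erase b = {a,c,d} := by
    rw [Finset.erase_insert_of_ne hab, Finset.erase_insert (by simp [hbc, hbd])]
  have e_c : (({a,b,c,d} : Finset V)).erase c = {a,b,d} := by
    rw [Finset.erase_insert_of_ne hac, Finset.erase_insert_of_ne hbc,
      Finset.erase_insert (by simp [hcd])]
  have e_d : (({a,b,c,d} : Finset V)).erase d = {a,b,c} := by
    rw [Finset.erase_insert_of_ne had, Finset.erase_insert_of_ne hbd,
      Finset.erase_insert_of_ne hcd]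
    simp
  have htri : ((({a,b,c,d} : Finset V).powersetCard 3).filter fun T =>
        ∀ v ∈ T, (T.filter fun u => G.Adj v u).card = 2).card
      = (if G.Adj b c then 1 else 0) * (if G.Adj b d then 1 else 0) * (if G.Adj c d then 1 else 0)
        + (if G.Adj a c then 1 else 0) * (if G.Adj a d then 1 else 0) * (if G.Adj c d then 1 else 0)
        + (if G.Adj a b then 1 else 0) * (if G.Adj a d then 1 else 0) * (if G.Adj b d then 1 else 0)
        + (if G.Adj a b then 1 else 0) * (if G.Adj a c then 1 else 0) * (if G.Adj b c then 1 else 0) := by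
    rw [powersetCard_pred_card _ 3 hJ,
      card_filter_four a b c d hab hac had hbc hbd hcd, e_a, e_b, e_c, e_d]
    rw [← ite_and3, ← ite_and3, ← ite_and3, ← ite_and3]
    simp only [isTri_iff G b c d hbc hbd hcd, isTri_iff G a c d hac had hcd,
      isTri_iff G a b d hab had hbd, isTri_iff G a b c hab hac hbc]
  rw [sum_four a b c d hab hac had hbc hbd hcd
      (fun v => ((({a,b,c,d} : Finset V)).filter fun u => G.Adj v u).card),
    sum_four a b c d hab hac had hbc hbd hcd
      (fun v => ((({a,b,c,d} : Finset V)).filter fun u => G.Adj v u).card.choose 2),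
    sum_four a b c d hab hac had hbc hbd hcd
      (fun v => ((({a,b,c,d} : Finset V)).filter fun u => G.Adj v u).card.choose 3),
    htri]
  simp only [indep_iff]
  simp only [forall_four, hda, hdb, hdc, hdd]
  refine arith6 _ _ _ _ _ _ ?_ ?_ ?_ ?_ ?_ ?_ <;> split_ifs <;> omega

lemma adjPairs_card :
    ((univ : Finset (V × V)).filter fun p => G.Adj p.1 p.2).card = ∑ v : V, G.degree v := by
  rw [Finset.card_filter, ← Finset.univ_product_univ, Finset.sum_product]
  refine Finset.sum_congr rfl fun v _ => ?_
  rw [← Finset.card_filter]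
  have h : (univ : Finset V).filter (fun u => G.Adj v u) = G.neighborFinset v := by
    rw [← neighbor_inter G, inter_univ]
  rw [h]
  rfl

lemma cherry_card (m : ℕ) :
    (((univ : Finset V).sigma fun v => (G.neighborFinset v).powersetCard m)).card
      = ∑ v : V, (G.degree v).choose m := by
  rw [Finset.card_sigma]
  refine Finset.sum_congr rfl fun v _ => ?_
  rw [Finset.card_powersetCard, SimpleGraph.card_neighborFinset_eq_degree]

lemma global :
    2 * (Fintype.card V).choose 4
      + 2 * ((Fintype.card V - 3) * ∑ v : V, (G.degree v).choose 2)
      + 2 * numInducedReg G 4 1 + 2 * numInducedReg G 4 3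
    = (Fintype.card V - 2).choose 2 * (∑ v : V, G.degree v)
      + 2 * ((Fintype.card V - 3) * numInducedReg G 3 2)
      + 2 * (∑ v : V, (G.degree v).choose 3)
      + 2 * numInducedReg G 4 2 + 2 * numIndep G 4 := by
  classical
  set P4 := (univ : Finset V).powersetCard 4 with hP4
  have main : ∑ J ∈ P4,
        (2 + 2 * (∑ v ∈ J, ((J.filter fun u => G.Adj v u).card).choose 2)
          + 2 * (if (∀ v ∈ J, (J.filter fun u => G.Adj v u).card = 1) then 1 else 0)
          + 2 * (if (∀ v ∈ J, (J.filter fun u => G.Adj v u).card = 3) then 1 else 0))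
      = ∑ J ∈ P4,
        ((∑ v ∈ J, (J.filter fun u => G.Adj v u).card)
          + 2 * ((J.powersetCard 3).filter fun T =>
              ∀ v ∈ T, (T.filter fun u => G.Adj v u).card = 2).card
          + 2 * (∑ v ∈ J, ((J.filter fun u => G.Adj v u).card).choose 3)
          + 2 * (if (∀ v ∈ J, (J.filter fun u => G.Adj v u).card = 2) then 1 else 0)
          + 2 * (if (∀ u ∈ J, ∀ v ∈ J, ¬ G.Adj u v) then 1 else 0)) := by
    refine Finset.sum_congr rfl fun J hJ => ?_
    exact pointwise G J (Finset.mem_powersetCard.mp hJ).2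
  -- aggregate each piece
  have hcard : P4.card = (Fintype.card V).choose 4 := by
    rw [hP4, Finset.card_powersetCard, card_univ]
  have hA : ∑ J ∈ P4, (∑ v ∈ J, (J.filter fun u => G.Adj v u).card)
      = (Fintype.card V - 2).choose 2 * (∑ v : V, G.degree v) := by
    rw [← Finset.sum_congr rfl fun J (_ : J ∈ P4) => LA G J]
    have hcc : ∀ p ∈ ((univ : Finset (V × V)).filter fun p => G.Adj p.1 p.2),
        (({p.1, p.2} : Finset V)).card = 2 := by
      intro p hp
      simp only [mem_filter, mem_univ, true_and] at hp
      rw [Finset.card_insert_of_notMem (by simp [G.ne_of_adj hp]), Finset.card_singleton]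
    rw [hP4, master _ _ 2 4 hcc (by norm_num), adjPairs_card]
    ring_nf
  have hp2 : ∑ J ∈ P4, (∑ v ∈ J, ((J.filter fun u => G.Adj v u).card).choose 2)
      = (Fintype.card V - 3) * (∑ v : V, (G.degree v).choose 2) := by
    rw [← Finset.sum_congr rfl fun J (_ : J ∈ P4) => LPgen G 2 J]
    have hcc : ∀ x ∈ ((univ : Finset V).sigma fun v => (G.neighborFinset v).powersetCard 2),
        (insert x.1 x.2).card = 3 := by
      intro x hx
      simp only [mem_sigma, mem_univ, true_and, mem_powersetCard] at hx
      rw [Finset.card_insert_of_notMem fun h => G.irrefl ((G.mem_neighborFinset x.1 x.1).mp (hx.1 h)), hx.2]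
    rw [hP4, master _ _ 3 4 hcc (by norm_num), cherry_card]
    simp [Nat.choose_one_right, mul_comm]
  have hp3 : ∑ J ∈ P4, (∑ v ∈ J, ((J.filter fun u => G.Adj v u).card).choose 3)
      = ∑ v : V, (G.degree v).choose 3 := by
    rw [← Finset.sum_congr rfl fun J (_ : J ∈ P4) => LPgen G 3 J]
    have hcc : ∀ x ∈ ((univ : Finset V).sigma fun v => (G.neighborFinset v).powersetCard 3),
        (insert x.1 x.2).card = 4 := by
      intro x hx
      simp only [mem_sigma, mem_univ, true_and, mem_powersetCard] at hx
      rw [Finset.card_insert_of_notMem fun h => G.irrefl ((G.mem_neighborFinset x.1 x.1).mp (hx.1 h)), hx.2]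
    rw [hP4, master _ _ 4 4 hcc (by norm_num), cherry_card]
    norm_num
  have ht : ∑ J ∈ P4, ((J.powersetCard 3).filter fun T =>
        ∀ v ∈ T, (T.filter fun u => G.Adj v u).card = 2).card
      = (Fintype.card V - 3) * numInducedReg G 3 2 := by
    rw [← Finset.sum_congr rfl fun J (_ : J ∈ P4) => LTri G J]
    have hcc : ∀ T ∈ (((univ : Finset V).powersetCard 3).filter
          fun T => ∀ v ∈ T, (T.filter fun u => G.Adj v u).card = 2), (id T).card = 3 := by
      intro T hT
      simp only [mem_filter, mem_powersetCard] at hT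
      exact hT.1.2
    have hm := master (((univ : Finset V).powersetCard 3).filter
        fun T => ∀ v ∈ T, (T.filter fun u => G.Adj v u).card = 2) id 3 4 hcc (by norm_num)
    simp only [id_eq] at hm
    rw [hP4, hm, numInducedReg]
    simp [Nat.choose_one_right, mul_comm]
  have hM : ∑ J ∈ P4, (if (∀ v ∈ J, (J.filter fun u => G.Adj v u).card = 1) then 1 else 0)
      = numInducedReg G 4 1 := (Finset.card_filter _ _).symm
  have hK : ∑ J ∈ P4, (if (∀ v ∈ J, (J.filter fun u => G.Adj v u).card = 3) then 1 else 0)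
      = numInducedReg G 4 3 := (Finset.card_filter _ _).symm
  have hC : ∑ J ∈ P4, (if (∀ v ∈ J, (J.filter fun u => G.Adj v u).card = 2) then 1 else 0)
      = numInducedReg G 4 2 := (Finset.card_filter _ _).symm
  have hI : ∑ J ∈ P4, (if (∀ u ∈ J, ∀ v ∈ J, ¬ G.Adj u v) then 1 else 0)
      = numIndep G 4 := (Finset.card_filter _ _).symm
  have lhs_eq : ∑ J ∈ P4,
        (2 + 2 * (∑ v ∈ J, ((J.filter fun u => G.Adj v u).card).choose 2)
          + 2 * (if (∀ v ∈ J, (J.filter fun u => G.Adj v u).card = 1) then 1 else 0)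
          + 2 * (if (∀ v ∈ J, (J.filter fun u => G.Adj v u).card = 3) then 1 else 0))
      = 2 * P4.card
        + 2 * (∑ J ∈ P4, (∑ v ∈ J, ((J.filter fun u => G.Adj v u).card).choose 2))
        + 2 * numInducedReg G 4 1 + 2 * numInducedReg G 4 3 := by
    rw [Finset.sum_add_distrib, Finset.sum_add_distrib, Finset.sum_add_distrib,
      Finset.sum_const, ← Finset.mul_sum, ← Finset.mul_sum, ← Finset.mul_sum, hM, hK,
      smul_eq_mul, mul_comm P4.card 2]
  have rhs_eq : ∑ J ∈ P4,
        ((∑ v ∈ J, (J.filter fun u => G.Adj v u).card)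
          + 2 * ((J.powersetCard 3).filter fun T =>
              ∀ v ∈ T, (T.filter fun u => G.Adj v u).card = 2).card
          + 2 * (∑ v ∈ J, ((J.filter fun u => G.Adj v u).card).choose 3)
          + 2 * (if (∀ v ∈ J, (J.filter fun u => G.Adj v u).card = 2) then 1 else 0)
          + 2 * (if (∀ u ∈ J, ∀ v ∈ J, ¬ G.Adj u v) then 1 else 0))
      = (∑ J ∈ P4, (∑ v ∈ J, (J.filter fun u => G.Adj v u).card))
        + 2 * (∑ J ∈ P4, ((J.powersetCard 3).filter fun T =>
            ∀ v ∈ T, (T.filter fun u => G.Adj v u).card = 2).card)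
        + 2 * (∑ J ∈ P4, (∑ v ∈ J, ((J.filter fun u => G.Adj v u).card).choose 3))
        + 2 * numInducedReg G 4 2 + 2 * numIndep G 4 := by
    rw [Finset.sum_add_distrib, Finset.sum_add_distrib, Finset.sum_add_distrib,
      Finset.sum_add_distrib, ← Finset.mul_sum, ← Finset.mul_sum, ← Finset.mul_sum,
      ← Finset.mul_sum, hC, hI]
  rw [lhs_eq, rhs_eq, hcard, hA, hp2, hp3, ht] at main
  omega


end AuxStmt6


/-- For every `n`-vertex `r`-regular finite simple graph `G`,
`i_4(G) − k_4(G) = C(n,4) − C(n−2,2)·(nr/2) + (n−3)·(n·C(r,2) − k_3(G)) − n·C(r,3)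
  + (k₂⊎k₂)(G) − c_4(G)`, as an identity of integers. -/
theorem stmt_6 {V : Type*} [Fintype V] [DecidableEq V] (G : SimpleGraph V) [DecidableRel G.Adj]
    (n r : ℕ) (hn : Fintype.card V = n) (hreg : G.IsRegularOfDegree r) :
    (numIndep G 4 : ℤ) - numInducedReg G 4 3 =
      (n.choose 4 : ℤ) - ((n - 2).choose 2 : ℤ) * ((n * r / 2 : ℕ) : ℤ)
        + ((n : ℤ) - 3) * ((n : ℤ) * (r.choose 2 : ℤ) - numInducedReg G 3 2)
        - (n : ℤ) * (r.choose 3 : ℤ)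
        + numInducedReg G 4 1 - numInducedReg G 4 2 := by
  subst hn
  have hglob := global G
  have hdeg : ∑ v : V, G.degree v = Fintype.card V * r := by
    rw [Finset.sum_congr rfl fun v _ => hreg v, Finset.sum_const, card_univ, smul_eq_mul]
  have hch2 : ∑ v : V, (G.degree v).choose 2 = Fintype.card V * r.choose 2 := by
    rw [Finset.sum_congr rfl fun v _ => by rw [hreg v], Finset.sum_const, card_univ, smul_eq_mul]
  have hch3 : ∑ v : V, (G.degree v).choose 3 = Fintype.card V * r.choose 3 := by
    rw [Finset.sum_congr rfl fun v _ => by rw [hreg v], Finset.sum_const, card_univ, smul_eq_mul]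
  rw [hdeg, hch2, hch3] at hglob
  have handshake : Fintype.card V * r = 2 * G.edgeFinset.card := by
    rw [← hdeg, G.sum_degrees_eq_twice_card_edges]
  have hm : Fintype.card V * r = 2 * (Fintype.card V * r / 2) := by omega
  set n := Fintype.card V with hnn
  have hmZ : (n : ℤ) * (r : ℤ) = 2 * ((n * r / 2 : ℕ) : ℤ) := by exact_mod_cast hm
  by_cases h3 : 3 ≤ n
  · have hsub : ((n - 3 : ℕ) : ℤ) = (n : ℤ) - 3 := by
      push_cast [Nat.cast_sub h3]; ring
    have hglobZ : 2 * ((n.choose 4 : ℤ))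
        + 2 * (((n : ℤ) - 3) * ((n : ℤ) * (r.choose 2 : ℤ)))
        + 2 * (numInducedReg G 4 1 : ℤ) + 2 * (numInducedReg G 4 3 : ℤ)
      = ((n - 2).choose 2 : ℤ) * ((n : ℤ) * (r : ℤ))
        + 2 * (((n : ℤ) - 3) * (numInducedReg G 3 2 : ℤ))
        + 2 * ((n : ℤ) * (r.choose 3 : ℤ))
        + 2 * (numInducedReg G 4 2 : ℤ) + 2 * (numIndep G 4 : ℤ) := by
      rw [← hsub]
      exact_mod_cast hglob
    have h2 : 2 * ((numIndep G 4 : ℤ) - numInducedReg G 4 3)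
        = 2 * ((n.choose 4 : ℤ) - ((n - 2).choose 2 : ℤ) * ((n * r / 2 : ℕ) : ℤ)
          + ((n : ℤ) - 3) * ((n : ℤ) * (r.choose 2 : ℤ) - numInducedReg G 3 2)
          - (n : ℤ) * (r.choose 3 : ℤ)
          + numInducedReg G 4 1 - numInducedReg G 4 2) := by
      linear_combination -hglobZ - ((n - 2).choose 2 : ℤ) * hmZ
    linarith
  · have hps : (univ : Finset V).powersetCard 3 = ∅ := by
      rw [Finset.powersetCard_eq_empty, card_univ]
      omega
    have hk3 : numInducedReg G 3 2 = 0 := by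
      rw [numInducedReg, hps]
      simp
    have hsub0 : (n - 3 : ℕ) = 0 := by omega
    have hncr2 : (n : ℤ) * (r.choose 2 : ℤ) = 0 := by
      rcases Nat.eq_zero_or_pos n with h0 | h1
      · rw [h0]; simp
      · have : Nonempty V := Fintype.card_pos_iff.mp (by omega)
        obtain ⟨v⟩ := this
        have hr : r < n := by rw [← hreg v]; exact G.degree_lt_card_verts v
        have : r.choose 2 = 0 := Nat.choose_eq_zero_of_lt (by omega)
        rw [this]; simp
    rw [hsub0] at hglob
    norm_num at hglob
    have hglobZ : 2 * ((n.choose 4 : ℤ))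
        + 2 * (numInducedReg G 4 1 : ℤ) + 2 * (numInducedReg G 4 3 : ℤ)
      = ((n - 2).choose 2 : ℤ) * ((n : ℤ) * (r : ℤ))
        + 2 * ((n : ℤ) * (r.choose 3 : ℤ))
        + 2 * (numInducedReg G 4 2 : ℤ) + 2 * (numIndep G 4 : ℤ) := by
      exact_mod_cast hglob
    have hk3Z : (numInducedReg G 3 2 : ℤ) = 0 := by exact_mod_cast hk3
    have h2 : 2 * ((numIndep G 4 : ℤ) - numInducedReg G 4 3)
        = 2 * ((n.choose 4 : ℤ) - ((n - 2).choose 2 : ℤ) * ((n * r / 2 : ℕ) : ℤ)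
          + ((n : ℤ) - 3) * ((n : ℤ) * (r.choose 2 : ℤ) - numInducedReg G 3 2)
          - (n : ℤ) * (r.choose 3 : ℤ)
          + numInducedReg G 4 1 - numInducedReg G 4 2) := by
      linear_combination -hglobZ - ((n - 2).choose 2 : ℤ) * hmZ
        - (2*(n : ℤ) - 6) * (hncr2 - hk3Z)
    linarith
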